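/- Let I be an ideal of k[x₁,…,x_n] that is homogeneous with respect to some weight vector α ∈ (ℤ_{>0})^n. Then for every u ∈ ℝ^n with all u_i < 0 and every f ∈ k[[x]]·I nonzero, in_u(f) belongs to in_u(I), and consequently in_u(k[[x]]·I) = in_u(I); i.e., for α-homogeneous ideals the local and global initial ideals coincide on the interior of the negative orthant. -/

import Mathlib

/-! Since every `u i` is negative, only finitely many exponents have `u`-weight at least the
`u`-order of `P`, and all of them lie below some exponent `b`. Writing `P = ∑ aⱼ fⱼ` with
`fⱼ ∈ I` and truncating each `aⱼ` at `b` gives a polynomial `p ∈ I` with the same coefficients as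
`P` at all exponents `≤ b`; hence `in_u(P) = in_u(p) ∈ in_u(I)`. -/

open scoped Classical

noncomputable section

/-- The `u`-weight of an exponent vector. -/
def wtR {n : ℕ} (u : Fin n → ℝ) (α : Fin n →₀ ℕ) : ℝ := ∑ i, u i * (α i : ℝ)

/-- The `u`-order of a polynomial. -/
def pord {n : ℕ} {K : Type*} [CommSemiring K] (u : Fin n → ℝ)
    (f : MvPolynomial (Fin n) K) : ℝ :=
  if h : f = 0 then 0
  else f.support.sup' (MvPolynomial.support_nonempty.mpr h) (wtR u)

/-- The initial form `in_u(f)` of a polynomial. -/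
def initForm {n : ℕ} {K : Type*} [CommSemiring K] (u : Fin n → ℝ)
    (f : MvPolynomial (Fin n) K) : MvPolynomial (Fin n) K :=
  ∑ β ∈ f.support.filter (fun β => wtR u β = pord u f),
    MvPolynomial.monomial β (MvPolynomial.coeff β f)

/-- The initial ideal `in_u(I)` of a polynomial ideal. -/
def initIdeal {n : ℕ} {K : Type*} [CommSemiring K] (u : Fin n → ℝ)
    (I : Ideal (MvPolynomial (Fin n) K)) : Ideal (MvPolynomial (Fin n) K) :=
  Ideal.span {g | ∃ f ∈ I, f ≠ 0 ∧ g = initForm u f}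

/-- `g` is the initial form `in_u(P)` of the nonzero power series `P`. -/
def IsInit {n : ℕ} (K : Type*) [Field K] (u : Fin n → ℝ)
    (P : MvPowerSeries (Fin n) K) (g : MvPolynomial (Fin n) K) : Prop :=
  P ≠ 0 ∧ ∃ c : ℝ,
    (∃ α, MvPowerSeries.coeff α P ≠ 0 ∧ wtR u α = c) ∧
    (∀ α, MvPowerSeries.coeff α P ≠ 0 → wtR u α ≤ c) ∧
    (∀ α, MvPolynomial.coeff α g =
      if wtR u α = c then MvPowerSeries.coeff α P else 0)

open MvPowerSeries in
theorem MvPowerSeries.trunc'_trunc'_mul_trunc' {σ R : Type*} [DecidableEq σ] [CommSemiring R]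
    (b : σ →₀ ℕ) (f g : MvPowerSeries σ R) :
    trunc' R b (trunc' R b f * trunc' R b g : MvPolynomial σ R) = trunc' R b (f * g) := by
  ext m
  simp only [coeff_trunc', MvPolynomial.coeff_coe]
  split_ifs with hm
  · exact coeff_trunc'_mul_trunc'_eq_coeff_mul b f g hm
  · rfl

open MvPowerSeries in
theorem exists_mem_trunc'_eq {σ R : Type*} [DecidableEq σ] [CommSemiring R]
    {I : Ideal (MvPolynomial σ R)} {P : MvPowerSeries σ R}
    (hP : P ∈ Ideal.span ((fun f : MvPolynomial σ R => (f : MvPowerSeries σ R)) '' I))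
    (b : σ →₀ ℕ) : ∃ p ∈ I, trunc' R b (p : MvPowerSeries σ R) = trunc' R b P := by
  induction hP using Submodule.span_induction with
  | mem x hx =>
    obtain ⟨f, hf, rfl⟩ := hx
    exact ⟨f, hf, rfl⟩
  | zero => exact ⟨0, I.zero_mem, by simp⟩
  | add x y _ _ hx hy =>
    obtain ⟨p, hpI, hp⟩ := hx
    obtain ⟨q, hqI, hq⟩ := hy
    exact ⟨p + q, I.add_mem hpI hqI, by rw [MvPolynomial.coe_add, map_add, map_add, hp, hq]⟩
  | smul a x _ hx =>
    obtain ⟨p, hpI, hp⟩ := hx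
    refine ⟨trunc' R b a * p, I.mul_mem_left _ hpI, ?_⟩
    rw [smul_eq_mul, ← trunc'_trunc'_mul_trunc', ← hp, MvPolynomial.coe_mul,
      ← trunc'_trunc'_mul_trunc' b, trunc'_trunc' le_rfl]

section Weight

variable {n : ℕ} {u : Fin n → ℝ}

theorem wtR_le_mul_apply (hu : ∀ i, u i ≤ 0) (β : Fin n →₀ ℕ) (i : Fin n) :
    wtR u β ≤ u i * β i := by
  rw [wtR, ← Finset.add_sum_erase _ _ (Finset.mem_univ i)]
  exact add_le_of_nonpos_right <|
    Finset.sum_nonpos fun j _ => mul_nonpos_of_nonpos_of_nonneg (hu j) (Nat.cast_nonneg _)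

theorem exists_le_of_le_wtR (hu : ∀ i, u i < 0) (c : ℝ) :
    ∃ b : Fin n →₀ ℕ, ∀ β, c ≤ wtR u β → β ≤ b := by
  refine ⟨Finsupp.equivFunOnFinite.symm fun i => ⌈c / u i⌉₊, fun β hβ i => ?_⟩
  have hβi : (β i : ℝ) ≤ c / u i := by
    rw [le_div_iff_of_neg (hu i), mul_comm]
    exact hβ.trans (wtR_le_mul_apply (fun j => (hu j).le) β i)
  simpa using Nat.cast_le.1 (hβi.trans (Nat.le_ceil _))

variable {K : Type*}

theorem pord_eq_iff [CommSemiring K] {f : MvPolynomial (Fin n) K} (hf : f ≠ 0) {c : ℝ} :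
    pord u f = c ↔ (∃ β, MvPolynomial.coeff β f ≠ 0 ∧ wtR u β = c) ∧
      ∀ β, MvPolynomial.coeff β f ≠ 0 → wtR u β ≤ c := by
  simp only [← MvPolynomial.mem_support_iff]
  rw [pord, dif_neg hf]
  constructor
  · rintro rfl
    exact ⟨(Finset.exists_mem_eq_sup' _ _).imp fun β ⟨hβ, h⟩ => ⟨hβ, h.symm⟩,
      fun β hβ => Finset.le_sup' _ hβ⟩
  · rintro ⟨⟨β, hβ, rfl⟩, hle⟩
    exact le_antisymm (Finset.sup'_le _ _ hle) (Finset.le_sup' _ hβ)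

theorem coeff_initForm [CommSemiring K] (f : MvPolynomial (Fin n) K) (β : Fin n →₀ ℕ) :
    MvPolynomial.coeff β (initForm u f) =
      if wtR u β = pord u f then MvPolynomial.coeff β f else 0 := by
  rw [initForm, MvPolynomial.coeff_sum]
  simp only [MvPolynomial.coeff_monomial, Finset.sum_ite_eq', Finset.mem_filter,
    MvPolynomial.mem_support_iff]
  by_cases hw : wtR u β = pord u f <;> by_cases hβ : MvPolynomial.coeff β f = 0 <;> simp [*]

theorem isInit_coe_iff [Field K] (f g : MvPolynomial (Fin n) K) :
    IsInit K u (f : MvPowerSeries (Fin n) K) g ↔ f ≠ 0 ∧ g = initForm u f := by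
  simp only [IsInit, ne_eq, MvPolynomial.coe_eq_zero_iff, MvPolynomial.coeff_coe]
  refine and_congr_right fun hf => ?_
  simp only [MvPolynomial.ext_iff, coeff_initForm]
  constructor
  · rintro ⟨c, hmax, hle, h⟩
    obtain rfl := (pord_eq_iff hf).2 ⟨hmax, hle⟩
    exact h
  · obtain ⟨hmax, hle⟩ := (pord_eq_iff hf).1 rfl
    exact fun h => ⟨_, hmax, hle, h⟩

theorem IsInit.of_coeff_eq [Field K] {P Q : MvPowerSeries (Fin n) K} {g : MvPolynomial (Fin n) K}
    (hg : IsInit K u P g) {c : ℝ} (hc : ∃ β, MvPowerSeries.coeff β P ≠ 0 ∧ c ≤ wtR u β)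
    (hQ : ∀ β, c ≤ wtR u β → MvPowerSeries.coeff β Q = MvPowerSeries.coeff β P) :
    IsInit K u Q g := by
  obtain ⟨-, d, ⟨β₀, hβ₀, rfl⟩, hle, hcoeff⟩ := hg
  obtain ⟨β₁, hβ₁, hcβ₁⟩ := hc
  have hcd : c ≤ wtR u β₀ := hcβ₁.trans (hle β₁ hβ₁)
  have hQβ₀ : MvPowerSeries.coeff β₀ Q ≠ 0 := hQ β₀ hcd ▸ hβ₀
  refine ⟨fun h => hQβ₀ (by simp [h]), _, ⟨β₀, hQβ₀, rfl⟩, fun β hβ => ?_, fun β => ?_⟩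
  · by_contra! hlt
    exact (hle β (hQ β (hcd.trans hlt.le) ▸ hβ)).not_gt hlt
  · rw [hcoeff β]
    split_ifs with hw
    · exact (hQ β (hw ▸ hcd)).symm
    · rfl

theorem mem_initIdeal_of_isInit [Field K] {I : Ideal (MvPolynomial (Fin n) K)} (hu : ∀ i, u i < 0)
    {P : MvPowerSeries (Fin n) K}
    (hP : P ∈ Ideal.span ((fun f : MvPolynomial (Fin n) K => (f : MvPowerSeries (Fin n) K)) '' I))
    {g : MvPolynomial (Fin n) K} (hg : IsInit K u P g) : g ∈ initIdeal u I := by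
  obtain ⟨β₀, hβ₀⟩ := (MvPowerSeries.ne_zero_iff_exists_coeff_ne_zero P).1 hg.1
  obtain ⟨b, hb⟩ := exists_le_of_le_wtR hu (wtR u β₀)
  obtain ⟨p, hpI, hp⟩ := exists_mem_trunc'_eq hP b
  have hpg : IsInit K u p g := hg.of_coeff_eq ⟨β₀, hβ₀, le_rfl⟩ fun β hβ => by
    simpa [MvPowerSeries.coeff_trunc', hb β hβ] using congr(MvPolynomial.coeff β $hp)
  obtain ⟨hp0, rfl⟩ := (isInit_coe_iff p g).1 hpg
  exact Ideal.subset_span ⟨p, hpI, hp0, rfl⟩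

end Weight

theorem initial_ideal_homogeneous_case_general {n : ℕ} {K : Type*} [Field K]
    (I : Ideal (MvPolynomial (Fin n) K)) (u : Fin n → ℝ) (hu : ∀ i, u i < 0) :
    (∀ P ∈ Ideal.span
        ((fun f : MvPolynomial (Fin n) K => (f : MvPowerSeries (Fin n) K)) '' I),
      ∀ g : MvPolynomial (Fin n) K, IsInit K u P g → g ∈ initIdeal u I) ∧
    Ideal.span {g : MvPolynomial (Fin n) K |
        ∃ P ∈ Ideal.span
          ((fun f : MvPolynomial (Fin n) K => (f : MvPowerSeries (Fin n) K)) '' I),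
          IsInit K u P g} = initIdeal u I := by
  refine ⟨fun P hP g hg => mem_initIdeal_of_isInit hu hP hg,
    le_antisymm (Ideal.span_le.2 ?_) (Ideal.span_le.2 ?_)⟩
  · rintro g ⟨P, hP, hg⟩
    exact mem_initIdeal_of_isInit hu hP hg
  · rintro g ⟨f, hf, hf0, rfl⟩
    exact Ideal.subset_span ⟨f, Ideal.subset_span ⟨f, hf, rfl⟩, (isInit_coe_iff f _).2 ⟨hf0, rfl⟩⟩

/-- Let `I ⊆ k[x]` be an ideal homogeneous for some positive weight vector `α`.  Then for any
`u` with all `u_i < 0`, the initial form of every nonzero `P ∈ k[[x]]·I` lies in `in_u(I)`,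
and consequently `in_u(k[[x]]·I) = in_u(I)`. -/
theorem initial_ideal_homogeneous_case {n : ℕ} {K : Type*} [Field K]
    (I : Ideal (MvPolynomial (Fin n) K)) (α : Fin n → ℕ) (hα : ∀ i, 0 < α i)
    (hhom : ∃ S : Set (MvPolynomial (Fin n) K), I = Ideal.span S ∧
      ∀ g ∈ S, ∃ d : ℕ, ∀ β ∈ g.support, ∑ i, α i * β i = d)
    (u : Fin n → ℝ) (hu : ∀ i, u i < 0) :
    (∀ P ∈ Ideal.span
        ((fun f : MvPolynomial (Fin n) K => (f : MvPowerSeries (Fin n) K)) '' I),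
      ∀ g : MvPolynomial (Fin n) K, IsInit K u P g → g ∈ initIdeal u I) ∧
    Ideal.span {g : MvPolynomial (Fin n) K |
        ∃ P ∈ Ideal.span
          ((fun f : MvPolynomial (Fin n) K => (f : MvPowerSeries (Fin n) K)) '' I),
          IsInit K u P g} = initIdeal u I :=
  initial_ideal_homogeneous_case_general I u hu
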